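/- If u and v are adjacent vertices of degree 2 in a finite graph G lying on a 4-cycle u, x, v, y (with x,y the other two vertices of the cycle), then Ind(G) is homotopy equivalent to Σ Ind(G \ {u, v, x, y}). -/
import Mathlib


open scoped Classical

noncomputable section

/-- Geometric realization of the independence complex of the relation `R`. -/
def geom {V : Type*} [Fintype V] (R : V → V → Prop) : Set (V → ℝ) :=
  {f | (∀ x, 0 ≤ f x) ∧ (∑ x, f x) = 1 ∧ ∀ x y, f x ≠ 0 → f y ≠ 0 → ¬ R x y}

/-- Relation on `V ⊕ Fin 2` realizing the unreduced suspension `Σ Ind(R) = Ind(R) ∗ S⁰`. -/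
def suspRel {V : Type*} (R : V → V → Prop) : V ⊕ Fin 2 → V ⊕ Fin 2 → Prop :=
  fun x y =>
    match x, y with
    | Sum.inl a, Sum.inl b => R a b
    | Sum.inr a, Sum.inr b => a ≠ b
    | _, _ => False

/-- Fold map moving the weight of `x` onto `u` and the weight of `y` onto `v`. -/
def rmap {V : Type*} (u v x y : V) (f : V → ℝ) : V → ℝ :=
  fun w => if w = u then f u + f x else if w = v then f v + f y
    else if w = x ∨ w = y then 0 else f w

/-- If `u` and `v` are adjacent vertices of degree 2 of a finite graph `G` lying on a
4-cycle together with the two further vertices `x` and `y`, then `Ind(G)` is homotopy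
equivalent to `Σ Ind(G \ {u, v, x, y})`. -/
theorem stmt_6 {V : Type*} [Fintype V] (G : SimpleGraph V) (u v x y : V)
    (huv : u ≠ v) (hux : u ≠ x) (huy : u ≠ y) (hvx : v ≠ x) (hvy : v ≠ y) (hxy : x ≠ y)
    (a1 : G.Adj u v) (a2 : G.Adj v x) (a3 : G.Adj x y) (a4 : G.Adj y u)
    (hu : G.degree u = 2) (hv : G.degree v = 2) :
    Nonempty (ContinuousMap.HomotopyEquiv (geom G.Adj)
      (geom (suspRel (G.induce (({u, v, x, y} : Set V)ᶜ)).Adj))) := by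
  classical
  set S : Set V := ({u, v, x, y} : Set V)ᶜ with hS
  -- neighborhood characterizations
  have Nu : ∀ w, G.Adj u w → w = v ∨ w = y := by
    intro w hw
    have hsub : ({v, y} : Finset V) ⊆ G.neighborFinset u := by
      intro z hz
      simp only [Finset.mem_insert, Finset.mem_singleton] at hz
      rcases hz with rfl | rfl
      · simpa [SimpleGraph.mem_neighborFinset] using a1
      · simpa [SimpleGraph.mem_neighborFinset] using a4.symm
    have hcard : (G.neighborFinset u).card ≤ ({v, y} : Finset V).card := by
      rw [Finset.card_insert_of_notMem (by simp [hvy]), Finset.card_singleton]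
      rw [SimpleGraph.card_neighborFinset_eq_degree, hu]
    have heq := Finset.eq_of_subset_of_card_le hsub hcard
    have hwmem : w ∈ G.neighborFinset u := by
      simpa [SimpleGraph.mem_neighborFinset] using hw
    rw [← heq] at hwmem
    simpa using hwmem
  have Nv : ∀ w, G.Adj v w → w = u ∨ w = x := by
    intro w hw
    have hsub : ({u, x} : Finset V) ⊆ G.neighborFinset v := by
      intro z hz
      simp only [Finset.mem_insert, Finset.mem_singleton] at hz
      rcases hz with rfl | rfl
      · simpa [SimpleGraph.mem_neighborFinset] using a1.symm
      · simpa [SimpleGraph.mem_neighborFinset] using a2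
    have hcard : (G.neighborFinset v).card ≤ ({u, x} : Finset V).card := by
      rw [Finset.card_insert_of_notMem (by simp [hux]), Finset.card_singleton]
      rw [SimpleGraph.card_neighborFinset_eq_degree, hv]
    have heq := Finset.eq_of_subset_of_card_le hsub hcard
    have hwmem : w ∈ G.neighborFinset v := by
      simpa [SimpleGraph.mem_neighborFinset] using hw
    rw [← heq] at hwmem
    simpa using hwmem
  -- basic facts about S
  have huS : u ∉ S := by simp [hS]
  have hvS : v ∉ S := by simp [hS]
  have hxS : x ∉ S := by simp [hS]
  have hyS : y ∉ S := by simp [hS]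
  have hSne : ∀ w : V, w ∈ S → w ≠ u ∧ w ≠ v ∧ w ≠ x ∧ w ≠ y := by
    intro w hw
    simp only [hS, Set.mem_compl_iff, Set.mem_insert_iff, Set.mem_singleton_iff,
      not_or] at hw
    exact ⟨hw.1, hw.2.1, hw.2.2.1, hw.2.2.2⟩
  have hmemS : ∀ w : V, w ≠ u → w ≠ v → w ≠ x → w ≠ y → w ∈ S := by
    intro w h1 h2 h3 h4
    simp [hS, h1, h2, h3, h4]
  -- values of rmap
  have hr_u : ∀ f : V → ℝ, rmap u v x y f u = f u + f x := by
    intro f; simp [rmap]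
  have hr_v : ∀ f : V → ℝ, rmap u v x y f v = f v + f y := by
    intro f; simp [rmap, huv.symm]
  have hr_x : ∀ f : V → ℝ, rmap u v x y f x = 0 := by
    intro f; simp [rmap, hux.symm, hvx.symm]
  have hr_y : ∀ f : V → ℝ, rmap u v x y f y = 0 := by
    intro f; simp [rmap, huy.symm, hvy.symm]
  have hr_w : ∀ (f : V → ℝ) (w : V), w ≠ u → w ≠ v → w ≠ x → w ≠ y →
      rmap u v x y f w = f w := by
    intro f w h1 h2 h3 h4; simp [rmap, h1, h2, h3, h4]
  have hr_nonneg : ∀ f : V → ℝ, (∀ w, 0 ≤ f w) → ∀ w, 0 ≤ rmap u v x y f w := by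
    intro f hf w
    unfold rmap
    split_ifs with h1 h2 h3
    · exact add_nonneg (hf u) (hf x)
    · exact add_nonneg (hf v) (hf y)
    · exact le_refl 0
    · exact hf w
  -- the finset of the four special vertices
  set T : Finset V := {u, v, x, y} with hT
  have hsumT : ∀ f : V → ℝ, ∑ w ∈ T, f w = f u + f v + f x + f y := by
    intro f
    rw [hT]
    rw [Finset.sum_insert (by simp [huv, hux, huy]),
      Finset.sum_insert (by simp [hvx, hvy]),
      Finset.sum_insert (by simp [hxy]), Finset.sum_singleton]
    ring
  have hTc : ∀ w : V, w ∈ Tᶜ ↔ w ∈ S := by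
    intro w
    simp [hT, hS, not_or]
  have hsum_split : ∀ f : V → ℝ,
      ∑ w, f w = (∑ w ∈ Tᶜ, f w) + (f u + f v + f x + f y) := by
    intro f
    rw [← Finset.sum_add_sum_compl T f, hsumT f]
    ring
  have hsum_r : ∀ f : V → ℝ, ∑ w, rmap u v x y f w = ∑ w, f w := by
    intro f
    rw [hsum_split (rmap u v x y f), hsum_split f]
    have h1 : ∑ w ∈ Tᶜ, rmap u v x y f w = ∑ w ∈ Tᶜ, f w := by
      apply Finset.sum_congr rfl
      intro w hw
      rw [hTc] at hw
      obtain ⟨h1, h2, h3, h4⟩ := hSne w hw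
      exact hr_w f w h1 h2 h3 h4
    rw [h1, hr_u, hr_v, hr_x, hr_y]
    ring
  -- the key independence fact
  have hsplit : ∀ p q : ℝ, p + q ≠ 0 → p ≠ 0 ∨ q ≠ 0 := by
    intro p q h
    by_contra hc
    push_neg at hc
    simp [hc.1, hc.2] at h
  have key : ∀ f : V → ℝ, f ∈ geom G.Adj → ∀ a b : V,
      (f a ≠ 0 ∨ rmap u v x y f a ≠ 0) → (f b ≠ 0 ∨ rmap u v x y f b ≠ 0) →
      ¬ G.Adj a b := by
    intro f hf a b ha hb hadj
    obtain ⟨-, -, hind⟩ := hf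
    have hQ : ∀ c : V, (f c ≠ 0 ∨ rmap u v x y f c ≠ 0) →
        f c ≠ 0 ∨ (c = u ∧ f x ≠ 0) ∨ (c = v ∧ f y ≠ 0) := by
      intro c hc
      rcases hc with hc | hc
      · exact Or.inl hc
      · unfold rmap at hc
        split_ifs at hc with h1 h2 h3
        · rcases hsplit _ _ hc with h | h
          · exact Or.inl (by rw [h1]; exact h)
          · exact Or.inr (Or.inl ⟨h1, h⟩)
        · rcases hsplit _ _ hc with h | h
          · exact Or.inl (by rw [h2]; exact h)
          · exact Or.inr (Or.inr ⟨h2, h⟩)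
        · exact absurd rfl hc
        · exact Or.inl hc
    rcases hQ a ha with hA | ⟨hau, hfx⟩ | ⟨hav, hfy⟩ <;>
      rcases hQ b hb with hB | ⟨hbu, hfx'⟩ | ⟨hbv, hfy'⟩
    · exact hind a b hA hB hadj
    · rw [hbu] at hadj
      rcases Nu a hadj.symm with h | h <;> rw [h] at hA
      · exact hind v x hA hfx' a2
      · exact hind y x hA hfx' a3.symm
    · rw [hbv] at hadj
      rcases Nv a hadj.symm with h | h <;> rw [h] at hA
      · exact hind u y hA hfy' a4.symm
      · exact hind x y hA hfy' a3
    · rw [hau] at hadj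
      rcases Nu b hadj with h | h <;> rw [h] at hB
      · exact hind v x hB hfx a2
      · exact hind y x hB hfx a3.symm
    · rw [hau, hbu] at hadj
      exact G.irrefl hadj
    · exact hind x y hfx hfy' a3
    · rw [hav] at hadj
      rcases Nv b hadj with h | h <;> rw [h] at hB
      · exact hind u y hB hfy a4.symm
      · exact hind x y hB hfy a3
    · exact hind x y hfx' hfy a3
    · rw [hav, hbv] at hadj
      exact G.irrefl hadj
  -- membership of convex combinations along the homotopy
  have hmem : ∀ f : V → ℝ, f ∈ geom G.Adj → ∀ s t : ℝ, 0 ≤ s → 0 ≤ t → s + t = 1 →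
      (fun w => s * f w + t * rmap u v x y f w) ∈ geom G.Adj := by
    intro f hf s t hs ht hst
    obtain ⟨hpos, hsum, hind⟩ := hf
    refine ⟨?_, ?_, ?_⟩
    · intro w
      exact add_nonneg (mul_nonneg hs (hpos w)) (mul_nonneg ht (hr_nonneg f hpos w))
    · rw [Finset.sum_add_distrib, ← Finset.mul_sum, ← Finset.mul_sum, hsum_r, hsum]
      linarith
    · intro a b ha hb
      apply key f ⟨hpos, hsum, hind⟩ a b
      · by_contra hcon
        push_neg at hcon
        simp [hcon.1, hcon.2] at ha
      · by_contra hcon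
        push_neg at hcon
        simp [hcon.1, hcon.2] at hb
  -- the forward map
  set Fm : (V → ℝ) → ((↥S ⊕ Fin 2) → ℝ) := fun f =>
    Sum.elim (fun w => f w.1) (fun i => if i = 0 then f u + f x else f v + f y)
    with hFm
  set Gm : ((↥S ⊕ Fin 2) → ℝ) → (V → ℝ) := fun g w =>
    if w = u then g (Sum.inr 0) else if w = v then g (Sum.inr 1)
    else if h : w ∈ S then g (Sum.inl ⟨w, h⟩) else 0
    with hGm
  have hGm_u : ∀ g, Gm g u = g (Sum.inr 0) := by intro g; simp [hGm]
  have hGm_v : ∀ g, Gm g v = g (Sum.inr 1) := by intro g; simp [hGm, huv.symm]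
  have hGm_x : ∀ g, Gm g x = 0 := by
    intro g; simp [hGm, hux.symm, hvx.symm, dif_neg hxS]
  have hGm_y : ∀ g, Gm g y = 0 := by
    intro g; simp [hGm, huy.symm, hvy.symm, dif_neg hyS]
  have hGm_S : ∀ g (w : ↥S), Gm g w.1 = g (Sum.inl w) := by
    intro g w
    obtain ⟨h1, h2, h3, h4⟩ := hSne w.1 w.2
    simp [hGm, h1, h2, dif_pos w.2]
  have hsum_sub : ∀ f : V → ℝ, ∑ w ∈ Tᶜ, f w = ∑ w : ↥S, f w.1 := by
    intro f
    exact Finset.sum_subtype Tᶜ hTc f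
  -- forward membership
  have hF : ∀ f : V → ℝ, f ∈ geom G.Adj →
      Fm f ∈ geom (suspRel (G.induce S).Adj) := by
    intro f hf
    obtain ⟨hpos, hsum, hind⟩ := hf
    refine ⟨?_, ?_, ?_⟩
    · rintro (w | i)
      · exact hpos w.1
      · by_cases h : i = 0 <;> simp [hFm, h, add_nonneg (hpos u) (hpos x),
          add_nonneg (hpos v) (hpos y)]
    · rw [Fintype.sum_sum_type]
      have h2 : ∑ i : Fin 2, Fm f (Sum.inr i) = (f u + f x) + (f v + f y) := by
        simp [hFm, Fin.sum_univ_two]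
      have h1 : ∑ w : ↥S, Fm f (Sum.inl w) = ∑ w ∈ Tᶜ, f w := by
        rw [hsum_sub]; rfl
      rw [h1, h2]
      have := hsum_split f
      rw [hsum] at this
      linarith
    · rintro (a | i) (b | j) ha hb hadj
      · exact hind a.1 b.1 ha hb hadj
      · exact hadj
      · exact hadj
      · apply hadj
        simp only [hFm, Sum.elim_inr] at ha hb
        by_cases hi : i = 0 <;> by_cases hj : j = 0
        · rw [hi, hj]
        · exfalso
          rw [if_pos hi] at ha
          rw [if_neg hj] at hb
          rcases hsplit _ _ ha with h | h <;> rcases hsplit _ _ hb with h' | h'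
          · exact hind u v h h' a1
          · exact hind u y h h' a4.symm
          · exact hind x v h h' a2.symm
          · exact hind x y h h' a3
        · exfalso
          rw [if_neg hi] at ha
          rw [if_pos hj] at hb
          rcases hsplit _ _ hb with h | h <;> rcases hsplit _ _ ha with h' | h'
          · exact hind u v h h' a1
          · exact hind u y h h' a4.symm
          · exact hind x v h h' a2.symm
          · exact hind x y h h' a3
        · omega
  -- backward membership
  have hG : ∀ g : (↥S ⊕ Fin 2) → ℝ, g ∈ geom (suspRel (G.induce S).Adj) →
      Gm g ∈ geom G.Adj := by
    intro g hg
    obtain ⟨hpos, hsum, hind⟩ := hg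
    refine ⟨?_, ?_, ?_⟩
    · intro w
      rw [hGm]
      dsimp only
      split_ifs
      · exact hpos _
      · exact hpos _
      · exact hpos _
      · exact le_refl 0
    · rw [hsum_split (Gm g), hGm_u, hGm_v, hGm_x, hGm_y, hsum_sub (Gm g)]
      have h1 : ∑ w : ↥S, Gm g w.1 = ∑ w : ↥S, g (Sum.inl w) := by
        exact Finset.sum_congr rfl fun w _ => hGm_S g w
      rw [h1]
      rw [Fintype.sum_sum_type, Fin.sum_univ_two] at hsum
      linarith
    · -- independence
      have hval : ∀ c : V, Gm g c ≠ 0 →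
          (c = u ∧ g (Sum.inr 0) ≠ 0) ∨ (c = v ∧ g (Sum.inr 1) ≠ 0) ∨
          (∃ h : c ∈ S, g (Sum.inl ⟨c, h⟩) ≠ 0) := by
        intro c hc
        rw [hGm] at hc
        dsimp only at hc
        split_ifs at hc with h1 h2 h3
        · exact Or.inl ⟨h1, hc⟩
        · exact Or.inr (Or.inl ⟨h2, hc⟩)
        · exact Or.inr (Or.inr ⟨h3, hc⟩)
        · exact absurd rfl hc
      intro a b ha hb hadj
      have h01 : suspRel (G.induce S).Adj (Sum.inr 0) (Sum.inr 1) := by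
        simp [suspRel]
      rcases hval a ha with ⟨rfl, hga⟩ | ⟨rfl, hga⟩ | ⟨hmA, hga⟩ <;>
        rcases hval b hb with ⟨rfl, hgb⟩ | ⟨rfl, hgb⟩ | ⟨hmB, hgb⟩
      · exact G.irrefl hadj
      · exact hind _ _ hga hgb h01
      · rcases Nu b hadj with rfl | rfl
        · exact hvS hmB
        · exact hyS hmB
      · exact hind _ _ hgb hga h01
      · exact G.irrefl hadj
      · rcases Nv b hadj with rfl | rfl
        · exact huS hmB
        · exact hxS hmB
      · rcases Nu a hadj.symm with rfl | rfl
        · exact hvS hmA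
        · exact hyS hmA
      · rcases Nv a hadj.symm with rfl | rfl
        · exact huS hmA
        · exact hxS hmA
      · exact hind (Sum.inl ⟨a, hmA⟩) (Sum.inl ⟨b, hmB⟩) hga hgb hadj
  -- Gm ∘ Fm = rmap
  have hGF : ∀ f : V → ℝ, Gm (Fm f) = rmap u v x y f := by
    intro f
    funext w
    by_cases h1 : w = u
    · subst h1; rw [hGm_u, hr_u]; simp [hFm]
    by_cases h2 : w = v
    · subst h2; rw [hGm_v, hr_v]; simp [hFm]
    by_cases h3 : w = x
    · subst h3; rw [hGm_x, hr_x]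
    by_cases h4 : w = y
    · subst h4; rw [hGm_y, hr_y]
    · rw [hr_w f w h1 h2 h3 h4]
      have hw : w ∈ S := hmemS w h1 h2 h3 h4
      have := hGm_S (Fm f) ⟨w, hw⟩
      simpa [hFm] using this
  -- Fm ∘ Gm = id
  have hFG : ∀ g : (↥S ⊕ Fin 2) → ℝ, Fm (Gm g) = g := by
    intro g
    funext z
    rcases z with w | i
    · have := hGm_S g w
      simpa [hFm] using this
    · fin_cases i
      · simp [hFm, hGm_u, hGm_x]
      · simp [hFm, hGm_v, hGm_y]
  -- bundle continuous maps
  have hFc : Continuous fun p : geom G.Adj => Fm p.1 := by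
    apply continuous_pi
    rintro (w | i)
    · exact (continuous_apply w.1).comp continuous_subtype_val
    · simp only [hFm, Sum.elim_inr]
      split_ifs
      · exact (((continuous_apply u).comp continuous_subtype_val).add
          ((continuous_apply x).comp continuous_subtype_val))
      · exact (((continuous_apply v).comp continuous_subtype_val).add
          ((continuous_apply y).comp continuous_subtype_val))
  have hGc : Continuous fun q : geom (suspRel (G.induce S).Adj) => Gm q.1 := by
    apply continuous_pi
    intro w
    simp only [hGm]
    split_ifs
    · exact (continuous_apply _).comp continuous_subtype_val
    · exact (continuous_apply _).comp continuous_subtype_val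
    · exact (continuous_apply _).comp continuous_subtype_val
    · exact continuous_const
  set FC : C(geom G.Adj, geom (suspRel (G.induce S).Adj)) :=
    ⟨fun p => ⟨Fm p.1, hF p.1 p.2⟩, hFc.subtype_mk _⟩ with hFC
  set GC : C(geom (suspRel (G.induce S).Adj), geom G.Adj) :=
    ⟨fun q => ⟨Gm q.1, hG q.1 q.2⟩, hGc.subtype_mk _⟩ with hGC
  -- the homotopy from GC ∘ FC to the identity
  have hHc : Continuous fun p : (↥unitInterval) × (geom G.Adj) =>
      (fun w => (p.1.1 : ℝ) * p.2.1 w + (1 - p.1.1) * rmap u v x y p.2.1 w : V → ℝ) := by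
    apply continuous_pi
    intro w
    have hc1 : Continuous fun p : (↥unitInterval) × (geom G.Adj) => (p.1.1 : ℝ) :=
      continuous_subtype_val.comp continuous_fst
    have hc2 : Continuous fun p : (↥unitInterval) × (geom G.Adj) => p.2.1 w :=
      (continuous_apply w).comp (continuous_subtype_val.comp continuous_snd)
    have hc3 : Continuous fun p : (↥unitInterval) × (geom G.Adj) =>
        rmap u v x y p.2.1 w := by
      unfold rmap
      split_ifs
      · exact ((continuous_apply u).comp (continuous_subtype_val.comp continuous_snd)).add
          ((continuous_apply x).comp (continuous_subtype_val.comp continuous_snd))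
      · exact ((continuous_apply v).comp (continuous_subtype_val.comp continuous_snd)).add
          ((continuous_apply y).comp (continuous_subtype_val.comp continuous_snd))
      · exact continuous_const
      · exact (continuous_apply w).comp (continuous_subtype_val.comp continuous_snd)
    exact (hc1.mul hc2).add (((continuous_const.sub hc1)).mul hc3)
  refine ⟨{ toFun := FC, invFun := GC, left_inv := ?_, right_inv := ?_ }⟩
  · -- GC ∘ FC homotopic to id
    refine ⟨{ toContinuousMap := ⟨fun p => ⟨fun w => (p.1.1 : ℝ) * p.2.1 w +
        (1 - p.1.1) * rmap u v x y p.2.1 w,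
        hmem p.2.1 p.2.2 p.1.1 (1 - p.1.1) (unitInterval.nonneg p.1)
          (by linarith [unitInterval.le_one p.1]) (by ring)⟩,
        hHc.subtype_mk _⟩, map_zero_left := ?_, map_one_left := ?_ }⟩
    · intro p
      apply Subtype.ext
      funext w
      show (((0 : unitInterval) : ℝ)) * p.1 w + (1 - ((0 : unitInterval) : ℝ))
        * rmap u v x y p.1 w = Gm (Fm p.1) w
      rw [Set.Icc.coe_zero, hGF p.1]
      ring
    · intro p
      apply Subtype.ext
      funext w
      show (((1 : unitInterval) : ℝ)) * p.1 w + (1 - ((1 : unitInterval) : ℝ))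
        * rmap u v x y p.1 w = p.1 w
      rw [Set.Icc.coe_one]
      ring
  · -- FC ∘ GC = id
    have : FC.comp GC = ContinuousMap.id _ := by
      apply ContinuousMap.ext
      intro q
      apply Subtype.ext
      exact hFG q.1
    rw [this]
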